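/- arXiv:2509.24309 — 6 statements merged into one kernel-verified Lean document; each statement's English description precedes it below -/
import Mathlib

section
/- Let M be a matroid with weight function w : E → ℝ. If B₁ and B₂ are both minimum-weight bases of M, then for every real number c, the sets {e ∈ B₁ : w(e) = c} and {e ∈ B₂ : w(e) = c} have the same cardinality. -/
open Matroid

variable {α : Type*}

/-- The total weight of a set of elements. -/
noncomputable def wt (w : α → ℝ) (B : Set α) : ℝ := ∑ᶠ e ∈ B, w e

/-- `B` is a minimum-weight basis of `(M, w)`. -/
def MinWeightBase (M : Matroid α) (w : α → ℝ) (B : Set α) : Prop :=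
  M.IsBase B ∧ ∀ B', M.IsBase B' → wt w B ≤ wt w B'

/-- A circuit of a matroid: a minimal dependent set. -/
def IsCircuit (M : Matroid α) (C : Set α) : Prop :=
  C ⊆ M.E ∧ ¬ M.Indep C ∧ ∀ D ⊂ C, M.Indep D

open Set

/-! Let `B₁` be a minimum-weight basis and `S ⊆ ℝ` a lower set. If some basis had more elements
of weight in `S` than `B₁`, augmentation would give an element `f ∉ B₁` of weight in `S`
independent of those of `B₁`. The fundamental circuit of `f` in `B₁` then leaves `B₁` at some `g`
of weight outside `S`, hence heavier than `f`, and `B₁ + f - g` is a lighter basis. So all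
minimum-weight bases have equally many elements of weight `≤ c` and `< c`, for every `c`. -/

lemma wt_insert_sdiff_singleton (w : α → ℝ) {B : Set α} (hB : B.Finite) {f g : α}
    (hf : f ∉ B) (hg : g ∈ B) :
    wt w (insert f B \ {g}) = wt w B + w f - w g := by
  have hg' : g ∈ insert f B := mem_insert_of_mem f hg
  have hremove : wt w (insert f B) = w g + wt w (insert f B \ {g}) := by
    conv_lhs => rw [← insert_sdiff_self_of_mem hg']
    exact finsum_mem_insert w (fun h ↦ h.2 rfl) (hB.insert f).sdiff
  have hadd : wt w (insert f B) = w f + wt w B := finsum_mem_insert w hf hB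
  linarith

lemma Matroid.IsBase.exists_isBase_insert_sdiff {M : Matroid α} {B I : Set α} {f : α}
    (hB : M.IsBase B) (hfB : f ∉ B) (hfI : M.Indep (insert f I)) :
    ∃ g ∈ B \ I, M.IsBase (insert f B \ {g}) := by
  have hfE : f ∈ M.E := hfI.subset_ground (mem_insert f I)
  have hfcl : f ∈ M.closure B := by rwa [hB.closure_eq]
  have hC := hB.fundCircuit_isCircuit hfE hfB
  obtain ⟨g, hgC, hgI⟩ := not_subset.1 fun h ↦ hC.not_indep (hfI.subset h)
  have hgf : g ≠ f := fun h ↦ hgI (h ▸ mem_insert g I)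
  have hgB : g ∈ B := (M.fundCircuit_subset_insert f B hgC).resolve_left hgf
  refine ⟨g, ⟨hgB, fun h ↦ hgI (mem_insert_of_mem f h)⟩, ?_⟩
  exact hB.exchange_isBase_of_indep' hgB hfB ((hB.indep.mem_fundCircuit_iff hfcl hfB).1 hgC)

lemma MinWeightBase.ncard_weight_mem_le {M : Matroid α} [M.RankFinite] {w : α → ℝ}
    {B₁ B : Set α} (h₁ : MinWeightBase M w B₁) (hB : M.IsBase B) {S : Set ℝ} (hS : IsLowerSet S) :
    {e ∈ B | w e ∈ S}.ncard ≤ {e ∈ B₁ | w e ∈ S}.ncard := by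
  by_contra! hlt
  have hfin₁ : {e ∈ B₁ | w e ∈ S}.Finite := h₁.1.finite.subset (sep_subset _ _)
  have hfin : {e ∈ B | w e ∈ S}.Finite := hB.finite.subset (sep_subset _ _)
  have hencard : {e ∈ B₁ | w e ∈ S}.encard < {e ∈ B | w e ∈ S}.encard := by
    rwa [← hfin₁.cast_ncard_eq, ← hfin.cast_ncard_eq, Nat.cast_lt]
  obtain ⟨f, ⟨⟨-, hfS⟩, hfI⟩, hfind⟩ :=
    (h₁.1.indep.subset (sep_subset _ _)).augment (hB.indep.subset (sep_subset _ _)) hencard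
  have hfB₁ : f ∉ B₁ := fun h ↦ hfI ⟨h, hfS⟩
  obtain ⟨g, ⟨hgB₁, hgI⟩, hbase⟩ := h₁.1.exists_isBase_insert_sdiff hfB₁ hfind
  have hwt := h₁.2 _ hbase
  rw [wt_insert_sdiff_singleton w h₁.1.finite hfB₁ hgB₁] at hwt
  exact hgI ⟨hgB₁, hS (by linarith : w g ≤ w f) hfS⟩

lemma MinWeightBase.ncard_weight_mem_eq {M : Matroid α} [M.RankFinite] {w : α → ℝ}
    {B₁ B₂ : Set α} (h₁ : MinWeightBase M w B₁) (h₂ : MinWeightBase M w B₂) {S : Set ℝ}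
    (hS : IsLowerSet S) : {e ∈ B₁ | w e ∈ S}.ncard = {e ∈ B₂ | w e ∈ S}.ncard :=
  le_antisymm (h₂.ncard_weight_mem_le h₁.1 hS) (h₁.ncard_weight_mem_le h₂.1 hS)

lemma sep_weight_eq (w : α → ℝ) (B : Set α) (c : ℝ) :
    {e ∈ B | w e = c} = {e ∈ B | w e ∈ Iic c} \ {e ∈ B | w e ∈ Iio c} := by
  ext e
  simp only [mem_sep_iff, mem_sdiff, mem_Iic, mem_Iio, not_and, not_lt]
  constructor
  · rintro ⟨he, rfl⟩
    exact ⟨⟨he, le_rfl⟩, fun _ ↦ le_rfl⟩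
  · rintro ⟨⟨he, hle⟩, hge⟩
    exact ⟨he, hle.antisymm (hge he)⟩

/-- Any two minimum-weight bases of a matroid contain, for every real
number `c`, the same number of elements of weight `c`. -/
theorem stmt2 [Fintype α] (M : Matroid α) (w : α → ℝ) (B₁ B₂ : Set α)
    (h₁ : MinWeightBase M w B₁) (h₂ : MinWeightBase M w B₂) (c : ℝ) :
    {e ∈ B₁ | w e = c}.ncard = {e ∈ B₂ | w e = c}.ncard := by
  have hsub (B : Set α) : {e ∈ B | w e ∈ Iio c} ⊆ {e ∈ B | w e ∈ Iic c} :=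
    fun e he ↦ ⟨he.1, mem_Iic.2 (mem_Iio.1 he.2).le⟩
  rw [sep_weight_eq, sep_weight_eq, ncard_sdiff (hsub B₁), ncard_sdiff (hsub B₂),
    h₁.ncard_weight_mem_eq h₂ (isLowerSet_Iic c), h₁.ncard_weight_mem_eq h₂ (isLowerSet_Iio c)]
end

section
/- Let G be a directed acyclic graph with vertices s, v, and let P be a path from s to v. Let S ⊆ E(P) with edges e₁ = (t₁,s₁), …, e_k = (t_k,s_k) appearing in this order on P, and set s₀ = s, t_{k+1} = v. Then P is the unique s-v path containing all edges of S if and only if for each 0 ≤ i ≤ k, there is exactly one path from s_i to t_{i+1} in G. -/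
/-!
Let `(t₁, s₁)` be the first prescribed edge. In a DAG every later prescribed edge starts at a
vertex reachable from `s₁`, so on any `s`-`v` path through all prescribed edges it lies after
`(t₁, s₁)`; and an `s`-`t₁` path followed by an `s₁`-`v` path is always a path. Hence these paths
are exactly the concatenations of an `s`-`t₁` path with an `s₁`-`v` path through the remaining
edges, such a concatenation is unique iff both factors are, and induction on the number of
prescribed edges finishes the proof.
-/

variable {V : Type*}

/-- `l` is the vertex list of a directed simple path from `u` to `v` using edges in `E`. -/
def IsPathOn (E : Set (V × V)) (u v : V) (l : List V) : Prop :=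
  l ≠ [] ∧ l.Chain' (fun a b => (a, b) ∈ E) ∧ l.Nodup ∧ l.head? = some u ∧ l.getLast? = some v

/-- The list of edges of a path, in order. -/
def pathEdges (l : List V) : List (V × V) := l.zip l.tail

/-- A directed graph (given by its edge set) is acyclic. -/
def Acyclic (E : Set (V × V)) : Prop :=
  ∀ x : V, ¬ Relation.TransGen (fun a b => (a, b) ∈ E) x x

/-- There is exactly one directed path from `u` to `v` (`u ↝! v`). -/
def UniquePath (E : Set (V × V)) (u v : V) : Prop :=
  ∃! l : List V, IsPathOn E u v l

open Relation List

variable {E : Set (V × V)}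

lemma IsPathOn.reflTransGen_source {u v x : V} {l : List V} (h : IsPathOn E u v l)
    (hx : x ∈ l) : ReflTransGen (fun a b => (a, b) ∈ E) u x := by
  obtain ⟨-, hchain, -, hu, -⟩ := h
  refine hchain.induction (ReflTransGen _ u) _ (fun _ _ hab hux => hux.tail hab)
    (fun lne => ?_) x hx
  rw [(head_eq_iff_head?_eq_some lne).mpr hu]

lemma IsPathOn.reflTransGen_target {u v x : V} {l : List V} (h : IsPathOn E u v l)
    (hx : x ∈ l) : ReflTransGen (fun a b => (a, b) ∈ E) x v := by
  obtain ⟨-, hchain, -, -, hv⟩ := h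
  refine hchain.backwards_induction (ReflTransGen _ · v) _ (fun _ _ hab hbv => hbv.head hab)
    (fun _ => ?_) x hx
  rw [getLast_of_mem_getLast? hv]

lemma Acyclic.not_reflTransGen {a b : V} (hacyc : Acyclic E) (hab : (a, b) ∈ E) :
    ¬ ReflTransGen (fun a b => (a, b) ∈ E) b a :=
  fun hba => hacyc a (TransGen.head' hab hba)

lemma fst_mem_of_mem_pathEdges {l : List V} {e : V × V} (he : e ∈ pathEdges l) : e.1 ∈ l :=
  (of_mem_zip he).1

lemma pathEdges_append {a b : V} :
    ∀ {A : List V} (B : List V), A.getLast? = some a → B.head? = some b →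
      pathEdges (A ++ B) = pathEdges A ++ (a, b) :: pathEdges B
  | [], _, hA, _ => by simp at hA
  | [x], b' :: B, hA, hB => by
    simp only [getLast?_singleton, head?_cons, Option.some.injEq] at hA hB
    subst hA hB
    rfl
  | x :: y :: A, B, hA, hB => by
    rw [getLast?_cons_cons] at hA
    change (x, y) :: pathEdges (y :: A ++ B) = (x, y) :: pathEdges (y :: A) ++ _
    rw [pathEdges_append B hA hB, cons_append]

lemma exists_append_of_cons_sublist_pathEdges {e : V × V} {es : List (V × V)} :
    ∀ {l : List V}, (e :: es).Sublist (pathEdges l) →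
      ∃ A B, l = A ++ B ∧ A.getLast? = some e.1 ∧ B.head? = some e.2 ∧ es.Sublist (pathEdges B)
  | [], h | [_], h => by simp [pathEdges] at h
  | x :: y :: l, h => by
    change (e :: es).Sublist ((x, y) :: pathEdges (y :: l)) at h
    cases h with
    | cons _ h =>
      obtain ⟨A, B, hl, hA, hB, hes⟩ := exists_append_of_cons_sublist_pathEdges h
      refine ⟨x :: A, B, by rw [cons_append, ← hl], ?_, hB, hes⟩
      cases A with
      | nil => simp at hA
      | cons => rwa [getLast?_cons_cons]
    | cons_cons _ h => exact ⟨[x], y :: l, rfl, rfl, rfl, h⟩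

lemma IsPathOn.append {s a b v : V} {A B : List V} (hacyc : Acyclic E)
    (hA : IsPathOn E s a A) (hB : IsPathOn E b v B) (hab : (a, b) ∈ E) :
    IsPathOn E s v (A ++ B) := by
  have hdisj : Disjoint A B := fun x hxA hxB =>
    hacyc.not_reflTransGen hab ((hB.reflTransGen_source hxB).trans (hA.reflTransGen_target hxA))
  obtain ⟨hA0, hAc, hAn, hAh, hAl⟩ := hA
  obtain ⟨hB0, hBc, hBn, hBh, hBl⟩ := hB
  refine ⟨by simp [hA0], ?_, nodup_append'.2 ⟨hAn, hBn, hdisj⟩, ?_, ?_⟩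
  · refine isChain_append.2 ⟨hAc, hBc, fun x hx y hy => ?_⟩
    rw [hAl, Option.mem_some_iff] at hx
    rw [hBh, Option.mem_some_iff] at hy
    exact hx ▸ hy ▸ hab
  · rw [head?_append, hAh]; rfl
  · rwa [getLast?_append_of_ne_nil _ hB0]

lemma IsPathOn.of_append {s v a b : V} {A B : List V} (h : IsPathOn E s v (A ++ B))
    (hA : A.getLast? = some a) (hB : B.head? = some b) :
    IsPathOn E s a A ∧ IsPathOn E b v B ∧ (a, b) ∈ E := by
  obtain ⟨-, hc, hn, hh, hl⟩ := h
  have hA0 : A ≠ [] := by rintro rfl; simp at hA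
  have hB0 : B ≠ [] := by rintro rfl; simp at hB
  replace hc := isChain_append.1 hc
  rw [nodup_append] at hn
  rw [head?_append_of_ne_nil _ hA0] at hh
  rw [getLast?_append_of_ne_nil _ hB0] at hl
  exact ⟨⟨hA0, hc.1, hn.1, hh, hA⟩, ⟨hB0, hc.2.1, hn.2.1, hB, hl⟩,
    hc.2.2 a (by simp [hA]) b (by simp [hB])⟩

lemma Set.subsingleton_image2_iff {α β γ : Type*} {f : α → β → γ} {A : Set α} {B : Set β}
    (hf₁ : ∀ b, Function.Injective (f · b)) (hf₂ : ∀ a, Function.Injective (f a))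
    (hA : A.Nonempty) (hB : B.Nonempty) :
    (Set.image2 f A B).Subsingleton ↔ A.Subsingleton ∧ B.Subsingleton := by
  refine ⟨fun h => ⟨fun a ha a' ha' => ?_, fun b hb b' hb' => ?_⟩,
    fun ⟨hA', hB'⟩ => hA'.image2 hB' f⟩
  · obtain ⟨b, hb⟩ := hB
    exact hf₁ b (h (Set.mem_image2_of_mem ha hb) (Set.mem_image2_of_mem ha' hb))
  · obtain ⟨a, ha⟩ := hA
    exact hf₂ a (h (Set.mem_image2_of_mem ha hb) (Set.mem_image2_of_mem ha hb'))

def pathsVia (E : Set (V × V)) (u v : V) (es : List (V × V)) : Set (List V) :=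
  {l | IsPathOn E u v l ∧ ∀ e ∈ es, e ∈ pathEdges l}

lemma uniquePath_iff {u v : V} :
    UniquePath E u v ↔ (pathsVia E u v []).Nonempty ∧ (pathsVia E u v []).Subsingleton := by
  simp only [UniquePath, pathsVia, not_mem_nil, IsEmpty.forall_iff, implies_true, and_true]
  exact ⟨fun ⟨l, hl, h⟩ => ⟨⟨l, hl⟩, fun a ha b hb => (h a ha).trans (h b hb).symm⟩,
    fun ⟨⟨l, hl⟩, h⟩ => ⟨l, hl, fun l' hl' => h hl' hl⟩⟩

lemma pathsVia_cons {u v t w : V} {es : List (V × V)} (hacyc : Acyclic E) (htw : (t, w) ∈ E)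
    (hreach : ∀ e ∈ es, ReflTransGen (fun a b => (a, b) ∈ E) w e.1) :
    pathsVia E u v ((t, w) :: es) =
      Set.image2 (· ++ ·) (pathsVia E u t []) (pathsVia E w v es) := by
  ext l
  constructor
  · rintro ⟨hl, hes⟩
    obtain ⟨A, B, rfl, hA, hB, -⟩ := exists_append_of_cons_sublist_pathEdges (es := [])
      (singleton_sublist.2 (hes _ mem_cons_self))
    obtain ⟨hpA, hpB, -⟩ := hl.of_append hA hB
    refine ⟨A, ⟨hpA, by simp⟩, B, ⟨hpB, fun e he => ?_⟩, rfl⟩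
    have hreach_t : ¬ ReflTransGen (fun a b => (a, b) ∈ E) e.1 t := fun het =>
      hacyc.not_reflTransGen htw ((hreach e he).trans het)
    rcases mem_append.1 (pathEdges_append B hA hB ▸ hes e (mem_cons_of_mem _ he)) with heA | heB
    · exact absurd (hpA.reflTransGen_target (fst_mem_of_mem_pathEdges heA)) hreach_t
    · rcases mem_cons.1 heB with rfl | heB
      · exact absurd .refl hreach_t
      · exact heB
  · rintro ⟨A, ⟨hA, -⟩, B, ⟨hB, hes⟩, rfl⟩
    refine ⟨hA.append hacyc hB htw, fun e he => ?_⟩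
    rw [pathEdges_append B hA.2.2.2.2 hB.2.2.2.1]
    rcases mem_cons.1 he with rfl | he
    · exact mem_append_right _ mem_cons_self
    · exact mem_append_right _ (mem_cons_of_mem _ (hes e he))

lemma subsingleton_pathsVia_iff (hacyc : Acyclic E) :
    ∀ {s v : V} {l : List V} {es : List (V × V)}, IsPathOn E s v l → es.Sublist (pathEdges l) →
      ((pathsVia E s v es).Subsingleton ↔
        ∀ p ∈ (s :: es.map Prod.snd).zip (es.map Prod.fst ++ [v]), UniquePath E p.1 p.2)
  | s, v, l, [], hP, _ => by
    simp [uniquePath_iff, show (pathsVia E s v []).Nonempty from ⟨l, hP, by simp⟩]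
  | s, v, l, (t, w) :: es, hP, hsub => by
    obtain ⟨A, B, rfl, hA, hB, hsub'⟩ := exists_append_of_cons_sublist_pathEdges hsub
    dsimp only at hA hB
    obtain ⟨hpA, hpB, htw⟩ := hP.of_append hA hB
    have hreach : ∀ e ∈ es, ReflTransGen (fun a b => (a, b) ∈ E) w e.1 := fun e he =>
      hpB.reflTransGen_source (fst_mem_of_mem_pathEdges (hsub'.subset he))
    have hne_A : (pathsVia E s t []).Nonempty := ⟨A, hpA, by simp⟩
    have hne_B : (pathsVia E w v es).Nonempty := ⟨B, hpB, fun _ he => hsub'.subset he⟩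
    rw [pathsVia_cons hacyc htw hreach,
      Set.subsingleton_image2_iff (fun _ => append_left_injective _)
        (fun _ => append_right_injective _) hne_A hne_B,
      subsingleton_pathsVia_iff hacyc hpB hsub']
    simp [uniquePath_iff, hne_A]

/-- Let `l` be a path from `s` to `v` in a DAG, and `es = [e₁, …, e_k]`
the edges of `S ⊆ E(P)` in the order in which they appear on `P` (a sublist of the edge
list of `l`). Writing `e_i = (t_i, s_i)`, `s₀ = s`, `t_{k+1} = v`, the path `l` is the
unique `s`-`v` path containing all edges of `S` iff `s_i ↝! t_{i+1}` for all `0 ≤ i ≤ k`. -/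
theorem stmt8 (E : Set (V × V)) (hacyc : Acyclic E) (s v : V) (l : List V)
    (hP : IsPathOn E s v l) (es : List (V × V)) (hsub : es.Sublist (pathEdges l)) :
    (∀ l', IsPathOn E s v l' → (∀ e ∈ es, e ∈ pathEdges l') → l' = l) ↔
      ∀ p ∈ (s :: es.map Prod.snd).zip (es.map Prod.fst ++ [v]), UniquePath E p.1 p.2 := by
  rw [← subsingleton_pathsVia_iff hacyc hP hsub]
  exact ⟨fun h l₁ h₁ l₂ h₂ => (h l₁ h₁.1 h₁.2).trans (h l₂ h₂.1 h₂.2).symm,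
    fun h l' hl' hes => h ⟨hl', hes⟩ ⟨hP, fun _ he => hsub.subset he⟩⟩
end

section
/- Let G be a directed acyclic graph whose s-t paths coincide with the shortest s-t paths, let P be an s-t path in G, and let H = G − E(P). Then a set S ⊆ E(G) is an anti-forcing set for P (i.e., P is the unique s-t path in G − S and S ∩ E(P) = ∅) if and only if S ∩ E(P) = ∅ and S is a multiway cut for the terminal set V(P) in H, i.e., for every pair of distinct vertices u, v ∈ V(P) there is no directed path from u to v in H − S. -/
variable {V : Type*}

/-!
Deleting `S` from the graph reduces the claim to `S = ∅`: in a DAG, an `s`-`t` path `P` is the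
only one iff no path avoiding `E(P)` joins two distinct vertices of `P`. A second `s`-`t` path
must leave `P` along an edge not in `E(P)`; following it to its next vertex on `P` gives such a
detour. Conversely, cut a detour from `u` at its first return `y` to `P`. Acyclicity forces `y`
to come after `u` on `P`, so replacing the piece of `P` from `u` to `y` by the detour gives a
second `s`-`t` path.
-/

open List Relation

theorem List.IsChain.and {R S : V → V → Prop} {l : List V} (hR : IsChain R l)
    (hS : IsChain S l) : IsChain (fun a b => R a b ∧ S a b) l := by
  rw [isChain_iff_getElem] at *
  exact fun i h => ⟨hR i h, hS i h⟩

theorem transGen_of_isChain_cons_append_singleton {R : V → V → Prop} {a b : V} {l : List V}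
    (h : IsChain R (a :: l ++ [b])) : TransGen R a b := by
  cases l with
  | nil => exact .single (by simpa using h)
  | cons c l =>
    simp only [cons_append, isChain_cons_cons] at h
    exact .head' h.1 (relationReflTransGen_of_exists_isChain_cons _ h.2 (by simp))

section Segments

variable {R F : V → V → Prop} {T : Set V}

theorem exists_eq_append_cons_of_exists_mem {w : List V} (h : ∃ y ∈ w, y ∈ T) :
    ∃ p y r, w = p ++ y :: r ∧ y ∈ T ∧ ∀ z ∈ p, z ∉ T := by
  classical
  obtain ⟨y, hy⟩ := Option.isSome_iff_exists.1
    ((find?_isSome (p := fun x => decide (x ∈ T)) (xs := w)).2 (by simpa using h))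
  obtain ⟨hyT, p, r, rfl, hp⟩ := find?_eq_some_iff_append.1 hy
  exact ⟨p, y, r, rfl, by simpa using hyT, fun z hz => by simpa using hp z hz⟩

theorem isChain_not_append_singleton (hF : ∀ a b, F a b → a ∈ T) {p : List V}
    (hp : ∀ z ∈ p, z ∉ T) (b : V) : IsChain (fun c d => ¬ F c d) (p ++ [b]) := by
  induction p with
  | nil => exact .singleton b
  | cons z p ih =>
    refine isChain_cons.2 ⟨fun y _ hzy => hp z mem_cons_self (hF z y hzy), ih ?_⟩
    exact fun x hx => hp x (mem_cons_of_mem z hx)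

theorem exists_bridge_infix (hF : ∀ a b, F a b → a ∈ T ∧ b ∈ T) {x : V} {w : List V}
    (hx : x ∈ T) (hlast : (x :: w).getLast (cons_ne_nil x w) ∈ T) (hR : IsChain R (x :: w))
    (hnF : ¬ IsChain F (x :: w)) :
    ∃ a m b, a :: m ++ [b] <:+: x :: w ∧ a ∈ T ∧ b ∈ T ∧
      IsChain (fun c d => R c d ∧ ¬ F c d) (a :: m ++ [b]) := by
  induction w generalizing x with
  | nil => exact absurd (.singleton x) hnF
  | cons y w ih =>
    rw [isChain_cons_cons] at hnF
    by_cases hxy : F x y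
    · obtain ⟨a, m, b, hinf, hmem⟩ := ih (hF x y hxy).2 (by simpa using hlast) hR.tail
        (fun h => hnF ⟨hxy, h⟩)
      exact ⟨a, m, b, hinf.trans (suffix_cons x _).isInfix, hmem⟩
    · obtain ⟨p, b, r, hyw, hb, hp⟩ :=
        exists_eq_append_cons_of_exists_mem (T := T) ⟨_, getLast_mem _, by simpa using hlast⟩
      have hpre : x :: p ++ [b] <+: x :: y :: w := by
        rw [hyw]; exact ⟨r, by simp⟩
      refine ⟨x, p, b, hpre.isInfix, hx, hb, (hR.prefix hpre).and ?_⟩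
      refine isChain_cons.2 ⟨?_, isChain_not_append_singleton (fun a b h => (hF a b h).1) hp b⟩
      cases p <;> simp_all

end Segments

section PathEdges

@[simp]
theorem pathEdges_cons_cons (a b : V) (l : List V) :
    pathEdges (a :: b :: l) = (a, b) :: pathEdges (b :: l) := rfl

theorem mem_of_mem_pathEdges {l : List V} {a b : V} (h : (a, b) ∈ pathEdges l) :
    a ∈ l ∧ b ∈ l :=
  (of_mem_zip h).imp id mem_of_mem_tail

theorem mem_pathEdges_append_cons_cons (l₁ l₂ : List V) (a b : V) :
    (a, b) ∈ pathEdges (l₁ ++ a :: b :: l₂) := by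
  induction l₁ with
  | nil => simp
  | cons c l₁ ih => cases l₁ <;> simp_all

theorem isChain_mem_pathEdges : ∀ l : List V, IsChain (fun a b => (a, b) ∈ pathEdges l) l
  | [] => .nil
  | [a] => .singleton a
  | a :: b :: l => .cons_cons (by simp)
      ((isChain_mem_pathEdges (b :: l)).imp fun _ _ h => by simp [h])

theorem eq_of_isChain_mem_pathEdges {l l' : List V} (hl : l.Nodup) (hl' : l'.Nodup)
    (hne : l' ≠ []) (hc : IsChain (fun a b => (a, b) ∈ pathEdges l) l')
    (hhead : l'.head? = l.head?) (hlast : l'.getLast? = l.getLast?) : l' = l := by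
  induction l' generalizing l with
  | nil => exact absurd rfl hne
  | cons x r ih =>
    obtain ⟨l₀, rfl⟩ := head?_eq_some_iff.1 hhead.symm
    cases r with
    | nil =>
      cases l₀ with
      | nil => rfl
      | cons z l₀ =>
        rw [getLast?_cons_cons] at hlast
        exact absurd (mem_of_getLast? hlast.symm) (nodup_cons.1 hl).1
    | cons y r =>
      rw [isChain_cons_cons] at hc
      obtain ⟨z, l₁, rfl⟩ : ∃ z l₁, l₀ = z :: l₁ := by
        cases l₀ with
        | nil => simp [pathEdges] at hc
        | cons z l₁ => exact ⟨z, l₁, rfl⟩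
      obtain rfl : y = z := by
        rcases mem_cons.1 hc.1 with h | h
        · simpa using h
        · exact absurd (mem_of_mem_pathEdges h).1 (nodup_cons.1 hl).1
      congr 1
      refine ih hl.of_cons hl'.of_cons (cons_ne_nil _ _) ?_ rfl (by simpa using hlast)
      refine hc.2.imp_of_mem_imp fun a b ha _ hab => ?_
      rcases mem_cons.1 hab with h | h
      · exact absurd (Prod.ext_iff.1 h).1 (ne_of_mem_of_not_mem ha (nodup_cons.1 hl').1)
      · exact h

end PathEdges

section Paths

variable {E : Set (V × V)} {s t : V}

theorem IsPathOn.diff {l : List V} (hl : IsPathOn E s t l) {S : Set (V × V)}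
    (hS : ∀ e ∈ pathEdges l, e ∉ S) : IsPathOn (E \ S) s t l :=
  ⟨hl.1, hl.2.1.and ((isChain_mem_pathEdges l).imp fun _ _ h => hS _ h), hl.2.2⟩

theorem IsPathOn.splice {u y : V} {l₁ m l₃ p : List V}
    (hl : IsPathOn E s t (l₁ ++ u :: (m ++ y :: l₃)))
    (hp : IsChain (fun a b => (a, b) ∈ E) (u :: p ++ [y])) (hpnd : p.Nodup)
    (hpl : ∀ z ∈ p, z ∉ l₁ ++ u :: (m ++ y :: l₃)) :
    IsPathOn E s t (l₁ ++ u :: (p ++ y :: l₃)) := by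
  obtain ⟨-, hc, hnd, hs, ht⟩ := hl
  refine ⟨by simp, ?_, ?_, by simpa using hs, ?_⟩
  · show List.IsChain _ _
    have h₁ : IsChain _ (l₁ ++ [u]) := hc.infix ⟨[], m ++ y :: l₃, by simp⟩
    have h₃ : IsChain _ ([y] ++ l₃) := hc.infix ⟨l₁ ++ u :: m, [], by simp⟩
    have h₁₂ : IsChain (fun a b => (a, b) ∈ E) (l₁ ++ u :: p ++ [y]) := by
      simpa using h₁.append_overlap (by simpa using hp) (cons_ne_nil u [])
    simpa using h₁₂.append_overlap h₃ (cons_ne_nil y [])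
  · have hperm : l₁ ++ u :: (p ++ y :: l₃) ~ p ++ (l₁ ++ u :: y :: l₃) := by
      simpa using perm_append_comm_assoc (l₁ ++ [u]) p (y :: l₃)
    have hsub : l₁ ++ u :: y :: l₃ <+ l₁ ++ u :: (m ++ y :: l₃) :=
      ((sublist_append_right m (y :: l₃)).cons_cons u).append_left l₁
    exact hperm.nodup_iff.2 (nodup_append.2 ⟨hpnd, hsub.nodup hnd,
      fun a ha b hb hab => hpl a ha (hab ▸ hsub.subset hb)⟩)
  · rw [getLast?_append_cons, ← cons_append, getLast?_append_cons] at ht ⊢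
    exact ht

theorem Acyclic.mono {E' : Set (V × V)} (hE : Acyclic E) (h : E' ⊆ E) : Acyclic E' :=
  fun x hx => hE x (TransGen.mono (fun _ _ hab => h hab) x x hx)

theorem Acyclic.mem_of_transGen (hE : Acyclic E) {l₁ l₂ : List V} {u y : V}
    (hl : IsChain (fun a b => (a, b) ∈ E) (l₁ ++ u :: l₂)) (hy : y ∈ l₁ ++ u :: l₂)
    (huy : TransGen (fun a b => (a, b) ∈ E) u y) : y ∈ l₂ := by
  rcases mem_append.1 hy with hy | hy
  · obtain ⟨m₁, m₂, rfl⟩ := append_of_mem hy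
    have hyu := relationReflTransGen_of_exists_isChain_cons (a := y) (b := u) (m₂ ++ [u])
      (hl.infix ⟨m₁, l₂, by simp⟩) (by simp)
    exact absurd (huy.trans_left hyu) (hE u)
  · rcases mem_cons.1 hy with rfl | hy
    · exact absurd huy (hE y)
    · exact hy

theorem Acyclic.not_isPathOn_diff_pathEdges (hE : Acyclic E) {l : List V}
    (hl : IsPathOn E s t l) (huniq : ∀ l', IsPathOn E s t l' → l' = l) {u v : V} (hu : u ∈ l)
    (hv : v ∈ l) (huv : u ≠ v) (q : List V) :
    ¬ IsPathOn (E \ {e | e ∈ pathEdges l}) u v q := by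
  rintro ⟨-, hqc, hqnd, hqu, hqv⟩
  obtain ⟨w, rfl⟩ := head?_eq_some_iff.1 hqu
  have hvw : v ∈ w :=
    (mem_cons.1 (mem_of_getLast? hqv)).resolve_left (Ne.symm huv)
  obtain ⟨p, y, r, rfl, hyl, hpl⟩ :=
    exists_eq_append_cons_of_exists_mem (T := {x | x ∈ l}) ⟨v, hvw, hv⟩
  have hseg : List.IsChain (fun a b => (a, b) ∈ E \ {e | e ∈ pathEdges l}) (u :: p ++ [y]) :=
    hqc.prefix ⟨r, by simp⟩
  have huy : TransGen (fun a b => (a, b) ∈ E) u y :=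
    transGen_of_isChain_cons_append_singleton (hseg.imp fun _ _ h => h.1)
  obtain ⟨l₁, l₂, rfl⟩ := append_of_mem hu
  obtain ⟨m, l₃, rfl⟩ := append_of_mem (hE.mem_of_transGen hl.2.1 hyl huy)
  have hspliced := huniq _ (hl.splice (hseg.imp fun _ _ h => h.1)
    (hqnd.of_cons.sublist (sublist_append_left p _)) hpl)
  -- The spliced path differs from `l`: by its edge `(u, y)` if `p = []`, else by `p`'s vertices.
  cases p with
  | nil =>
    simp only [nil_append] at hspliced
    exact (isChain_cons_cons.1 hseg).1.2
      (hspliced ▸ mem_pathEdges_append_cons_cons l₁ l₃ u y)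
  | cons z p => exact hpl z mem_cons_self (hspliced ▸ by simp)

theorem eq_of_forall_not_isPathOn_diff_pathEdges {l l' : List V} (hl : IsPathOn E s t l)
    (hno : ∀ u ∈ l, ∀ v ∈ l, u ≠ v → ¬ ∃ q, IsPathOn (E \ {e | e ∈ pathEdges l}) u v q)
    (hl' : IsPathOn E s t l') : l' = l := by
  obtain ⟨-, -, hlnd, hls, hlt⟩ := hl
  obtain ⟨hne, hc, hnd, hs, ht⟩ := hl'
  by_contra hne'
  have hnF : ¬ List.IsChain (fun a b => (a, b) ∈ pathEdges l) l' := fun hF =>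
    hne' (eq_of_isChain_mem_pathEdges hlnd hnd hne hF (hs.trans hls.symm) (ht.trans hlt.symm))
  obtain ⟨w, rfl⟩ := head?_eq_some_iff.1 hs
  have hlast : (s :: w).getLast (cons_ne_nil s w) ∈ l := by
    rw [Option.some_injective _ ((getLast?_eq_some_getLast _).symm.trans ht)]
    exact mem_of_getLast? hlt
  obtain ⟨a, m, b, hinf, ha, hb, hab⟩ := exists_bridge_infix (T := {x | x ∈ l})
    (fun _ _ h => mem_of_mem_pathEdges h) (mem_of_head? hls) hlast hc hnF
  have hqnd := hinf.sublist.nodup hnd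
  refine hno a ha b hb ?_
    ⟨a :: m ++ [b], by simp, hab.imp fun _ _ h => ⟨h.1, h.2⟩, hqnd, by simp, getLast?_concat⟩
  rintro rfl
  simp at hqnd

theorem Acyclic.forall_isPathOn_eq_iff (hE : Acyclic E) {l : List V} (hl : IsPathOn E s t l) :
    (∀ l', IsPathOn E s t l' → l' = l) ↔
      ∀ u ∈ l, ∀ v ∈ l, u ≠ v → ¬ ∃ q, IsPathOn (E \ {e | e ∈ pathEdges l}) u v q :=
  ⟨fun huniq _ hu _ hv huv ⟨q, hq⟩ =>
    hE.not_isPathOn_diff_pathEdges hl huniq hu hv huv q hq,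
    fun hno _ => eq_of_forall_not_isPathOn_diff_pathEdges hl hno⟩

end Paths

theorem stmt11_general (E : Set (V × V)) (hacyc : Acyclic E) (s t : V)
    (l : List V) (hP : IsPathOn E s t l) (S : Set (V × V)) :
    ((∀ e ∈ pathEdges l, e ∉ S) ∧ ∀ l' : List V, IsPathOn (E \ S) s t l' → l' = l) ↔
      ((∀ e ∈ pathEdges l, e ∉ S) ∧
        ∀ u ∈ l, ∀ v ∈ l, u ≠ v →
          ¬ ∃ q : List V, IsPathOn ((E \ {e | e ∈ pathEdges l}) \ S) u v q) := by
  rw [sdiff_right_comm]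
  exact and_congr_right fun hS => (hacyc.mono Set.sdiff_subset).forall_isPathOn_eq_iff (hP.diff hS)

/-- Let `G` be a DAG whose `s`-`t` paths all have the same length (they
coincide with the shortest `s`-`t` paths), let `l` be an `s`-`t` path and
`H = G − E(P)`. Then `S ⊆ E(G)` is an anti-forcing set for `P` (i.e. `S ∩ E(P) = ∅` and
`P` is the unique `s`-`t` path in `G − S`) iff `S ∩ E(P) = ∅` and `S` is a multiway cut
for the terminal set `V(P)` in `H`. -/
theorem stmt11 (E : Set (V × V)) (hacyc : Acyclic E) (s t : V)
    (hshort : ∀ l l' : List V, IsPathOn E s t l → IsPathOn E s t l' → l.length = l'.length)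
    (l : List V) (hP : IsPathOn E s t l) (S : Set (V × V)) (hSE : S ⊆ E) :
    ((∀ e ∈ pathEdges l, e ∉ S) ∧ ∀ l' : List V, IsPathOn (E \ S) s t l' → l' = l) ↔
      ((∀ e ∈ pathEdges l, e ∉ S) ∧
        ∀ u ∈ l, ∀ v ∈ l, u ≠ v →
          ¬ ∃ q : List V, IsPathOn ((E \ {e | e ∈ pathEdges l}) \ S) u v q) :=
  stmt11_general E hacyc s t l hP S
end

section
/- Let G be a connected edge-weighted multigraph, let w_min be the minimum edge weight, E_min the set of edges of weight w_min, and F a maximal forest of the subgraph (V(G), E_min). Then F is contained in some minimum-weight spanning tree of G. -/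
variable {V ε : Type*} [Fintype V] [Fintype ε]

/-- A multigraph on vertex set `V` is given by an edge type `ε` and an endpoint map
`ends : ε → Sym2 V`. A set `F` of edges is a forest iff every nonempty subfamily touches
strictly more vertices than it has edges. -/
def IsForest (ends : ε → Sym2 V) (F : Set ε) : Prop :=
  ∀ F' ⊆ F, F'.Nonempty → F'.ncard < {v : V | ∃ e ∈ F', v ∈ ends e}.ncard

/-- The (multi)graph with edge set `T` is connected. -/
def Conn (ends : ε → Sym2 V) (T : Set ε) : Prop :=
  ∀ a b : V, Relation.ReflTransGen (fun x y => ∃ e ∈ T, ends e = s(x, y)) a b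

/-- `T` is a spanning tree. -/
def IsSpanningTree (ends : ε → Sym2 V) (T : Set ε) : Prop :=
  IsForest ends T ∧ Conn ends T

/-- `T` is a minimum-weight spanning tree. -/
noncomputable def stWeight (w : ε → ℝ) (T : Set ε) : ℝ := ∑ᶠ e ∈ T, w e

def IsMST (ends : ε → Sym2 V) (w : ε → ℝ) (T : Set ε) : Prop :=
  IsSpanningTree ends T ∧ ∀ T' : Set ε, IsSpanningTree ends T' → stWeight w T ≤ stWeight w T'

/-!
Exchange argument. Take a minimum-weight spanning tree `T` missing as few edges of `F` as
possible. If an edge `e = xy` of `F` is not in `T`, the `T`-walk from `x` to `y` must leave the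
`T ∩ F`-component of `x` (as `F - e` does not join `x` and `y`), and its last exit is an edge
`f ∉ F`. Then `T - f + e` is a spanning tree, no heavier since `w e = wmin ≤ w f`, and it
misses fewer edges of `F`.

Forests are handled through the counting definition: a walk joining `x` and `y` touches at most
one vertex more than it has edges, whereas a forest in which `x` and `y` are not joined has, with
`x` and `y`, at least two vertices more than edges.
-/

section Multigraph

variable {V ε : Type*} {ends : ε → Sym2 V} {F S S' T P Q : Set ε} {e f g : ε} {x y z u v : V}

def Reach (ends : ε → Sym2 V) (S : Set ε) : V → V → Prop :=
  Relation.ReflTransGen fun x y => ∃ e ∈ S, ends e = s(x, y)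

def verts (ends : ε → Sym2 V) (S : Set ε) : Set V := {v | ∃ e ∈ S, v ∈ ends e}

theorem exists_ends_eq (ends : ε → Sym2 V) (e : ε) : ∃ x y, ends e = s(x, y) :=
  Sym2.exists.1 ⟨ends e, rfl⟩

theorem Reach.single (he : e ∈ S) (h : ends e = s(x, y)) : Reach ends S x y :=
  Relation.ReflTransGen.single ⟨e, he, h⟩

theorem Reach.trans (h : Reach ends S x y) (h' : Reach ends S y z) : Reach ends S x z :=
  Relation.ReflTransGen.trans h h'

theorem Reach.symm (h : Reach ends S x y) : Reach ends S y x := by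
  induction h with
  | refl => exact .refl
  | tail _ hstep ih =>
    obtain ⟨e, he, h⟩ := hstep
    exact (Reach.single he (h.trans Sym2.eq_swap)).trans ih

theorem Reach.mono (hS : S ⊆ S') (h : Reach ends S x y) : Reach ends S' x y :=
  Relation.ReflTransGen.mono (fun _ _ ⟨e, he, h⟩ => ⟨e, hS he, h⟩) _ _ h

theorem reach_of_mem_ends (he : e ∈ S) (hu : u ∈ ends e) (hv : v ∈ ends e) :
    Reach ends S u v := by
  obtain ⟨a, b, hab⟩ := exists_ends_eq ends e
  have hab' : Reach ends S a b := .single he hab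
  rw [hab, Sym2.mem_iff] at hu hv
  rcases hu with rfl | rfl <;> rcases hv with rfl | rfl
  exacts [.refl, hab', hab'.symm, .refl]

theorem Conn.of_forall_reach (hT : Conn ends T)
    (h : ∀ g ∈ T, ∀ p q, ends g = s(p, q) → Reach ends S p q) : Conn ends S :=
  fun a b =>
    Relation.ReflTransGen.lift' id (fun p q ⟨g, hg, hpq⟩ => h g hg p q hpq) _ _ (hT a b)

theorem verts_insert (h : ends e = s(x, y)) :
    verts ends (insert e S) = insert x (insert y (verts ends S)) := by
  ext v
  simp only [verts, Set.mem_ofPred_eq, Set.mem_insert_iff, or_and_right, exists_or,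
    exists_eq_left, h, Sym2.mem_iff, or_assoc]

theorem verts_mono (hS : S ⊆ S') : verts ends S ⊆ verts ends S' :=
  fun _ ⟨e, he, hv⟩ => ⟨e, hS he, hv⟩

theorem IsForest.mono (hT : IsForest ends T) (hS : S ⊆ T) : IsForest ends S :=
  fun F' hF' => hT F' (hF'.trans hS)

theorem Reach.exists_ncard_le [Finite V] [Finite ε] (h : Reach ends S x y) :
    ∃ P ⊆ S, (insert x (insert y (verts ends P))).ncard ≤ P.ncard + 1 := by
  induction h with
  | refl => exact ⟨∅, Set.empty_subset _, by simp [verts]⟩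
  | @tail c d _ hstep ih =>
    obtain ⟨P, hPS, hP⟩ := ih
    obtain ⟨g, hg, hcd⟩ := hstep
    by_cases hgP : g ∈ P
    · refine ⟨P, hPS, le_trans (Set.ncard_le_ncard ?_) hP⟩
      have hd : d ∈ verts ends P := ⟨g, hgP, by simp [hcd]⟩
      exact Set.insert_subset_insert (Set.insert_subset (Set.mem_insert_of_mem _ hd)
        (Set.subset_insert _ _))
    · refine ⟨insert g P, Set.insert_subset hg hPS, ?_⟩
      rw [Set.ncard_insert_of_notMem hgP, verts_insert hcd]
      calc (insert x (insert d (insert c (insert d (verts ends P))))).ncard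
          = (insert d (insert x (insert c (verts ends P)))).ncard := by
            congr 1; ext; simp only [Set.mem_insert_iff]; tauto
        _ ≤ P.ncard + 1 + 1 := (Set.ncard_insert_le _ _).trans (by omega)

theorem IsForest.not_reach_sdiff_singleton [Finite V] [Finite ε] (hT : IsForest ends T)
    (hf : f ∈ T) (huv : ends f = s(u, v)) : ¬ Reach ends (T \ {f}) u v := by
  intro h
  obtain ⟨P, hPT, hP⟩ := h.exists_ncard_le
  have hfP : f ∉ P := fun hfP => (hPT hfP).2 rfl
  have hlt := hT (insert f P) (Set.insert_subset hf (hPT.trans Set.sdiff_subset))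
    (Set.insert_nonempty f P)
  rw [Set.ncard_insert_of_notMem hfP] at hlt
  change _ < (verts ends (insert f P)).ncard at hlt
  rw [verts_insert huv] at hlt
  omega

theorem IsForest.ncard_add_one_le [Finite V] (hF : IsForest ends F) (x : V) :
    F.ncard + 1 ≤ (insert x (verts ends F)).ncard := by
  rcases F.eq_empty_or_nonempty with rfl | hne
  · simp [verts]
  · exact (hF F subset_rfl hne).trans_le (Set.ncard_le_ncard (Set.subset_insert _ _))

/-- Split `Q` into the edges reachable from `x` and the rest: these two forests have disjoint
vertex sets, containing `x` and `y` respectively, each with one vertex more than edges. -/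
theorem IsForest.ncard_add_two_le [Finite V] [Finite ε] (hQ : IsForest ends Q)
    (hxy : ¬ Reach ends Q x y) : Q.ncard + 2 ≤ (insert x (insert y (verts ends Q))).ncard := by
  set Qx := {e ∈ Q | ∀ v ∈ ends e, Reach ends Q x v}
  have hQx : Qx ⊆ Q := fun _ he => he.1
  have hdisj : Disjoint (insert x (verts ends Qx)) (insert y (verts ends (Q \ Qx))) := by
    have hreach : ∀ v ∈ insert x (verts ends Qx), Reach ends Q x v := by
      rintro v (rfl | ⟨e, he, hv⟩)
      exacts [.refl, he.2 v hv]
    refine Set.disjoint_left.2 fun v hv hv' => ?_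
    rcases hv' with rfl | ⟨e, ⟨heQ, heQx⟩, hve⟩
    · exact hxy (hreach v hv)
    · exact heQx ⟨heQ, fun v' hv' => (hreach v hv).trans (reach_of_mem_ends heQ hve hv')⟩
  have hsub : insert x (verts ends Qx) ∪ insert y (verts ends (Q \ Qx)) ⊆
      insert x (insert y (verts ends Q)) := by
    rintro v ((rfl | hv) | (rfl | hv))
    · exact Set.mem_insert _ _
    · exact Set.mem_insert_of_mem _ (Set.mem_insert_of_mem _ (verts_mono hQx hv))
    · exact Set.mem_insert_of_mem _ (Set.mem_insert _ _)
    · exact Set.mem_insert_of_mem _ (Set.mem_insert_of_mem _ (verts_mono Set.sdiff_subset hv))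
  have hcard := Set.ncard_le_ncard hsub
  rw [Set.ncard_union_eq hdisj] at hcard
  have hx := IsForest.ncard_add_one_le (IsForest.mono hQ hQx) x
  have hy := IsForest.ncard_add_one_le (IsForest.mono hQ (Set.sdiff_subset (t := Qx))) y
  have hQcard := Set.ncard_sdiff_add_ncard_of_subset hQx
  omega

theorem IsForest.insert_of_not_reach [Finite V] [Finite ε] (hP : IsForest ends P)
    (hg : ends g = s(x, y)) (hxy : ¬ Reach ends P x y) : IsForest ends (insert g P) := by
  intro F' hF' hne
  by_cases hgF' : g ∈ F'
  · have hQ : F' \ {g} ⊆ P := Set.sdiff_singleton_subset_iff.2 hF'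
    rw [← Set.insert_sdiff_self_of_mem hgF']
    change _ < (verts ends (insert g (F' \ {g}))).ncard
    rw [Set.ncard_insert_of_notMem (fun h => h.2 rfl), verts_insert hg]
    have := IsForest.ncard_add_two_le (IsForest.mono hP hQ) fun h => hxy (h.mono hQ)
    omega
  · exact hP F' ((Set.subset_insert_iff_of_notMem hgF').1 hF') hne

theorem exists_isSpanningTree [Finite V] [Finite ε] (hconn : Conn ends Set.univ) :
    ∃ T, IsSpanningTree ends T := by
  obtain ⟨M, hM, hmax⟩ := Set.exists_max_image {S : Set ε | IsForest ends S} Set.ncard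
    (Set.toFinite _) ⟨∅, fun F' hF' hne => absurd (Set.subset_empty_iff.1 hF') hne.ne_empty⟩
  refine ⟨M, hM, Conn.of_forall_reach hconn fun g _ p q hpq => ?_⟩
  by_contra hnot
  have hgM : g ∉ M := fun hg => hnot (.single hg hpq)
  have := hmax _ (IsForest.insert_of_not_reach hM hpq hnot)
  rw [Set.ncard_insert_of_notMem hgM] at this
  omega

/-- `f` is the last edge of the walk leaving `C`; the rest of the walk stays outside `C`,
so it cannot use `f`. -/
theorem Reach.exists_last_exit {C : Set V} (h : Reach ends T x z) (hx : x ∈ C) (hz : z ∉ C) :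
    ∃ f ∈ T, ∃ u ∈ C, ∃ v ∉ C, ends f = s(u, v) ∧ Reach ends (T \ {f}) v z := by
  induction h with
  | refl => exact absurd hx hz
  | @tail c d _ hstep ih =>
    obtain ⟨g, hg, hcd⟩ := hstep
    by_cases hc : c ∈ C
    · exact ⟨g, hg, c, hc, d, hz, hcd, .refl⟩
    obtain ⟨f, hf, u, hu, v, hv, huv, hvc⟩ := ih hc
    have hgf : g ≠ f := by
      rintro rfl
      have hug : u ∈ ends g := by simp [huv]
      rw [hcd, Sym2.mem_iff] at hug
      rcases hug with rfl | rfl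
      exacts [hc hu, hz hu]
    exact ⟨f, hf, u, hu, v, hv, huv, hvc.trans (.single ⟨hg, hgf⟩ hcd)⟩

theorem IsSpanningTree.exists_exchange [Finite V] [Finite ε] {A : Set ε}
    (hT : IsSpanningTree ends T) (he : ends e = s(x, y)) (hA : ¬ Reach ends (T ∩ A) x y) :
    ∃ f ∈ T \ A, IsSpanningTree ends (insert e (T \ {f})) := by
  have hTxy : Reach ends T x y := hT.2 x y
  obtain ⟨f, hfT, u, hu, v, hv, huv, hvy⟩ :=
    hTxy.exists_last_exit (C := {z | Reach ends (T ∩ A) x z}) .refl hA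
  have hfA : f ∉ A := fun hfA => hv (hu.trans (.single ⟨hfT, hfA⟩ huv))
  have hxu : Reach ends (T \ {f}) x u := hu.mono fun g hg => ⟨hg.1, fun h => hfA (h ▸ hg.2)⟩
  have hxy : ¬ Reach ends (T \ {f}) x y := fun h =>
    IsForest.not_reach_sdiff_singleton hT.1 hfT huv ((hxu.symm.trans h).trans hvy.symm)
  have hsub : T \ {f} ⊆ insert e (T \ {f}) := Set.subset_insert _ _
  have hends : ∀ p ∈ ends f, Reach ends (insert e (T \ {f})) x p := by
    have hey : Reach ends (insert e (T \ {f})) x y := .single (Set.mem_insert _ _) he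
    intro p hp
    rw [huv, Sym2.mem_iff] at hp
    rcases hp with rfl | rfl
    exacts [hxu.mono hsub, hey.trans (hvy.symm.mono hsub)]
  refine ⟨f, ⟨hfT, hfA⟩,
    IsForest.insert_of_not_reach (IsForest.mono hT.1 Set.sdiff_subset) he hxy,
    Conn.of_forall_reach hT.2 fun g hg p q hpq => ?_⟩
  by_cases hgf : g = f
  · subst hgf
    exact (hends p (by simp [hpq])).symm.trans (hends q (by simp [hpq]))
  · exact .single (hsub ⟨hg, hgf⟩) hpq

theorem stWeight_insert_sdiff_add [Finite ε] (w : ε → ℝ) (he : e ∉ T) (hf : f ∈ T) :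
    stWeight w (insert e (T \ {f})) + w f = stWeight w T + w e := by
  have he' : e ∉ T \ {f} := fun h => he h.1
  conv_rhs => rw [← Set.insert_sdiff_self_of_mem hf]
  simp only [stWeight, finsum_mem_insert w he' (Set.toFinite _),
    finsum_mem_insert w (fun h => h.2 rfl : f ∉ T \ {f}) (Set.toFinite _)]
  ring

theorem exists_isMST [Finite V] [Finite ε] (w : ε → ℝ) (hconn : Conn ends Set.univ) :
    ∃ T, IsMST ends w T := by
  obtain ⟨T, hT, hmin⟩ := Set.exists_min_image {T : Set ε | IsSpanningTree ends T}
    (stWeight w) (Set.toFinite _) (exists_isSpanningTree hconn)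
  exact ⟨T, hT, hmin⟩

theorem IsMST.of_stWeight_le {w : ε → ℝ} (hT : IsMST ends w T) (hS : IsSpanningTree ends S)
    (hle : stWeight w S ≤ stWeight w T) : IsMST ends w S :=
  ⟨hS, fun T' hT' => hle.trans (hT.2 T' hT')⟩

theorem ncard_sdiff_exchange_lt [Finite ε] (heF : e ∈ F) (heT : e ∉ T) (hfF : f ∉ F) :
    (F \ insert e (T \ {f})).ncard < (F \ T).ncard := by
  refine (Set.ncard_le_ncard ?_).trans_lt (Set.ncard_sdiff_singleton_lt_of_mem ⟨heF, heT⟩)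
  rintro g ⟨hgF, hgT'⟩
  refine ⟨⟨hgF, fun hgT => hgT' (Or.inr ⟨hgT, ?_⟩)⟩, fun hge => hgT' (Or.inl hge)⟩
  rintro rfl
  exact hfF hgF

end Multigraph

theorem stmt12_general (ends : ε → Sym2 V) (w : ε → ℝ) (hconn : Conn ends Set.univ)
    (wmin : ℝ) (hwmin : IsLeast (Set.range w) wmin)
    (F : Set ε) (hFsub : F ⊆ {e | w e = wmin}) (hF : IsForest ends F) :
    ∃ T : Set ε, IsMST ends w T ∧ F ⊆ T := by
  obtain ⟨T, hT, hmin⟩ := Set.exists_min_image {T : Set ε | IsMST ends w T}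
    (fun T => (F \ T).ncard) (Set.toFinite _) (exists_isMST w hconn)
  refine ⟨T, hT, fun e heF => by_contra fun heT => ?_⟩
  obtain ⟨x, y, hxy⟩ := exists_ends_eq ends e
  have hTF : ¬ Reach ends (T ∩ F) x y := fun h => IsForest.not_reach_sdiff_singleton hF heF hxy
    (h.mono fun g hg => ⟨hg.2, fun hge => heT (hge ▸ hg.1)⟩)
  obtain ⟨f, ⟨hfT, hfF⟩, hT'⟩ := IsSpanningTree.exists_exchange hT.1 hxy hTF
  have hwe : w e = wmin := hFsub heF
  have hwf : wmin ≤ w f := hwmin.2 ⟨f, rfl⟩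
  have hT'mst : IsMST ends w (insert e (T \ {f})) := IsMST.of_stWeight_le hT hT'
    (by linarith [stWeight_insert_sdiff_add w heT hfT])
  exact (hmin _ hT'mst).not_gt (ncard_sdiff_exchange_lt heF heT hfF)

/-- In a connected edge-weighted multigraph, any maximal forest `F` of the
subgraph formed by the edges of minimum weight `wmin` is contained in some minimum-weight
spanning tree. -/
theorem stmt12 (ends : ε → Sym2 V) (w : ε → ℝ) (hconn : Conn ends Set.univ)
    (wmin : ℝ) (hwmin : IsLeast (Set.range w) wmin)
    (F : Set ε) (hFsub : F ⊆ {e | w e = wmin}) (hF : IsForest ends F)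
    (hFmax : ∀ F' : Set ε, F ⊆ F' → F' ⊆ {e | w e = wmin} → IsForest ends F' → F' = F) :
    ∃ T : Set ε, IsMST ends w T ∧ F ⊆ T :=
  stmt12_general ends w hconn wmin hwmin F hFsub hF
end

section
/- Let M be a matroid with weight w : E → ℝ, let w_min = min_{e∈E} w(e), E_min = {e : w(e) = w_min}, and let B_min be a basis of the restriction M | E_min. Then B_min is contained in some minimum-weight basis of M. -/
/-! Take any minimum-weight basis `B₀` and extend `Bmin` to a basis `B ⊆ Bmin ∪ B₀`. The sets
`B \ B₀ ⊆ Bmin` and `B₀ \ B` have the same size, every element of the first has the least weight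
`wmin` and every element of the second has weight at least `wmin`, so `wt B ≤ wt B₀`. -/

open Matroid

variable {α : Type*}

theorem wt_inter_add_wt_sdiff (w : α → ℝ) {s : Set α} (hs : s.Finite) (t : Set α) :
    wt w (s ∩ t) + wt w (s \ t) = wt w s :=
  finsum_mem_inter_add_sdiff t hs

theorem wt_le_wt_of_ncard_eq {w : α → ℝ} {s t : Set α} (hs : s.Finite) (ht : t.Finite)
    (hst : s.ncard = t.ncard) {c : ℝ} (hsc : ∀ e ∈ s, w e ≤ c) (hct : ∀ f ∈ t, c ≤ w f) :
    wt w s ≤ wt w t := by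
  rw [wt, wt, finsum_mem_eq_finite_toFinset_sum _ hs, finsum_mem_eq_finite_toFinset_sum _ ht]
  calc ∑ e ∈ hs.toFinset, w e ≤ hs.toFinset.card • c :=
        Finset.sum_le_card_nsmul _ _ _ fun e he ↦ hsc e (hs.mem_toFinset.1 he)
    _ = ht.toFinset.card • c := by
        rw [← Set.ncard_eq_toFinset_card s hs, ← Set.ncard_eq_toFinset_card t ht, hst]
    _ ≤ ∑ f ∈ ht.toFinset, w f :=
        Finset.card_nsmul_le_sum _ _ _ fun f hf ↦ hct f (ht.mem_toFinset.1 hf)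

namespace Matroid

variable {M : Matroid α} {w : α → ℝ} {I B B₀ : Set α} {c : ℝ}

theorem exists_minWeightBase [M.Finite] (w : α → ℝ) : ∃ B, MinWeightBase M w B := by
  have hfin : {B : Set α | M.IsBase B}.Finite :=
    M.ground_finite.finite_subsets.subset fun _ hB ↦ hB.subset_ground
  obtain ⟨B, hB, hBmin⟩ := hfin.exists_minimalFor (wt w) _ M.exists_isBase
  exact ⟨B, hB, fun B' hB' ↦ le_of_not_gt fun hlt ↦ (hBmin hB' hlt.le).not_gt hlt⟩

theorem IsBase.wt_le_of_subset_union [M.Finite] (hB : M.IsBase B) (hB₀ : M.IsBase B₀)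
    (hBI : B ⊆ I ∪ B₀) (hIc : ∀ e ∈ I, w e ≤ c) (hcE : ∀ f ∈ M.E, c ≤ w f) :
    wt w B ≤ wt w B₀ := by
  have hdiff : wt w (B \ B₀) ≤ wt w (B₀ \ B) :=
    wt_le_wt_of_ncard_eq hB.finite.sdiff hB₀.finite.sdiff (hB.ncard_sdiff_comm hB₀)
      (fun e he ↦ hIc e ((hBI he.1).resolve_right he.2))
      (fun f hf ↦ hcE f (hB₀.subset_ground hf.1))
  calc wt w B = wt w (B ∩ B₀) + wt w (B \ B₀) := (wt_inter_add_wt_sdiff w hB.finite B₀).symm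
    _ ≤ wt w (B₀ ∩ B) + wt w (B₀ \ B) := by rw [Set.inter_comm]; gcongr
    _ = wt w B₀ := wt_inter_add_wt_sdiff w hB₀.finite B

theorem Indep.exists_minWeightBase_superset [M.Finite] (hI : M.Indep I)
    (hIc : ∀ e ∈ I, w e ≤ c) (hcE : ∀ f ∈ M.E, c ≤ w f) :
    ∃ B, MinWeightBase M w B ∧ I ⊆ B := by
  obtain ⟨B₀, hB₀, hB₀min⟩ := M.exists_minWeightBase w
  obtain ⟨B, hB, hIB, hBI⟩ := hI.exists_isBase_subset_union_isBase hB₀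
  exact ⟨B, ⟨hB, fun B' hB' ↦ (hB.wt_le_of_subset_union hB₀ hBI hIc hcE).trans (hB₀min B' hB')⟩,
    hIB⟩

end Matroid

theorem stmt13_general [Fintype α] (M : Matroid α) (w : α → ℝ)
    (wmin : ℝ) (hwmin : IsLeast (w '' M.E) wmin)
    (Bmin : Set α) (hBmin : (M ↾ {e ∈ M.E | w e = wmin}).IsBase Bmin) :
    ∃ B : Set α, MinWeightBase M w B ∧ Bmin ⊆ B := by
  obtain ⟨hBmin_indep, hBmin_sub⟩ := restrict_indep_iff.1 hBmin.indep
  exact hBmin_indep.exists_minWeightBase_superset (fun e he ↦ (hBmin_sub he).2.le)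
    fun f hf ↦ hwmin.2 ⟨f, hf, rfl⟩

/-- If `wmin` is the minimum weight on the ground set,
`Emin = {e ∈ E : w e = wmin}`, and `Bmin` is a basis of the restriction `M ↾ Emin`,
then `Bmin` is contained in some minimum-weight basis of `M`. -/
theorem stmt13 [Fintype α] (M : Matroid α) (w : α → ℝ) (hE : M.E.Nonempty)
    (wmin : ℝ) (hwmin : IsLeast (w '' M.E) wmin)
    (Bmin : Set α) (hBmin : (M ↾ {e ∈ M.E | w e = wmin}).IsBase Bmin) :
    ∃ B : Set α, MinWeightBase M w B ∧ Bmin ⊆ B :=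
  stmt13_general M w wmin hwmin Bmin hBmin
end

section
/- Let M be a matroid on ground set E with weight w, and let B be the basis produced by the greedy procedure that, iteratively on the (current contracted) matroid, adds a basis of the restriction to the minimum-weight remaining elements and contracts them. Then B is a minimum-weight basis of M. -/
open Matroid

variable {α : Type*}

/-- The contraction `M / X`, defined by duality from restriction. -/
noncomputable def ctr (M : Matroid α) (X : Set α) : Matroid α := (M✶ ↾ (M.E \ X))✶

/-- The outputs of the greedy procedure: while the ground set is nonempty, pick a basis of
the restriction to the minimum-weight elements, add it, and contract those elements. -/
inductive GreedyOut (w : α → ℝ) : Matroid α → Set α → Prop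
  | empty (M : Matroid α) (h : M.E = ∅) : GreedyOut w M ∅
  | step (M : Matroid α) (wmin : ℝ) (hmin : IsLeast (w '' M.E) wmin)
      (Bmin B' : Set α) (hBmin : (M ↾ {e ∈ M.E | w e = wmin}).IsBase Bmin)
      (hrec : GreedyOut w (ctr M {e ∈ M.E | w e = wmin}) B') :
      GreedyOut w M (Bmin ∪ B')

/-! By induction along the procedure it suffices to treat one step. If `I` is a basis of the set
`X` of minimum-weight elements and `B` a minimum-weight base of `M ／ X`, then `I ∪ B` is a base.
Given any base `B'`, extend `I` inside `I ∪ B'` to a base `B₃`; it meets `X` in exactly `I`, so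
`B₃ \ X` is a base of `M ／ X` and `w(I ∪ B) ≤ w(B₃)`. Finally `B₃ \ B' ⊆ I` has only
minimum-weight elements while `B' \ B₃` has equally many elements of at least that weight. -/

open Set

lemma ctr_eq_contract (M : Matroid α) (X : Set α) : ctr M X = M ／ X := rfl

lemma Matroid.IsBasis.contract_isBase_iff {M : Matroid α} {I X B : Set α}
    (hI : M.IsBasis I X) : (M ／ X).IsBase B ↔ M.IsBase (B ∪ I) ∧ Disjoint B X := by
  have hcl : M.closure (B ∪ I) = M.closure (B ∪ X) :=
    closure_union_congr_right hI.closure_eq_closure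
  refine ⟨fun hB => ?_, fun ⟨hB, hdj⟩ => ?_⟩
  · have hind : M.Indep (B ∪ I) := (hI.contract_indep_iff.1 hB.indep).1
    have hsp : M.Spanning (B ∪ X) := ((contract_spanning_iff hI.subset_ground).1 hB.spanning).1
    refine ⟨hind.isBase_of_spanning ?_, (subset_sdiff.1 hB.subset_ground).2⟩
    rw [spanning_iff, hcl]
    exact ⟨hsp.closure_eq, hind.subset_ground⟩
  · have hsp : M.Spanning (B ∪ X) := by
      rw [spanning_iff, ← hcl]
      exact ⟨hB.closure_eq, union_subset (subset_union_left.trans hB.subset_ground)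
        hI.subset_ground⟩
    exact (hI.contract_indep_iff.2 ⟨hB.indep, hdj.symm⟩).isBase_of_spanning
      ((contract_spanning_iff hI.subset_ground).2 ⟨hsp, hdj⟩)

section Weight

variable {w : α → ℝ} {S T : Set α} {c : ℝ}

lemma wt_inter_add_wt_sdiff_s17 (hS : S.Finite) (T : Set α) :
    wt w (S ∩ T) + wt w (S \ T) = wt w S :=
  finsum_mem_inter_add_sdiff T hS

lemma wt_union (hS : S.Finite) (hT : T.Finite) (h : Disjoint S T) :
    wt w (S ∪ T) = wt w S + wt w T :=
  finsum_mem_union h hS hT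

lemma wt_le_ncard_mul (hS : S.Finite) (h : ∀ e ∈ S, w e ≤ c) : wt w S ≤ S.ncard * c := by
  rw [wt, finsum_mem_eq_finite_toFinset_sum _ hS, ncard_eq_toFinset_card _ hS, ← nsmul_eq_mul]
  exact Finset.sum_le_card_nsmul _ _ _ fun e he => h e (hS.mem_toFinset.1 he)

lemma ncard_mul_le_wt (hS : S.Finite) (h : ∀ e ∈ S, c ≤ w e) : S.ncard * c ≤ wt w S := by
  rw [wt, finsum_mem_eq_finite_toFinset_sum _ hS, ncard_eq_toFinset_card _ hS, ← nsmul_eq_mul]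
  exact Finset.card_nsmul_le_sum _ _ _ fun e he => h e (hS.mem_toFinset.1 he)

lemma Matroid.IsBase.wt_le_of_sdiff_le_le_sdiff {M : Matroid α} [M.RankFinite] {B₁ B₂ : Set α}
    (hB₁ : M.IsBase B₁) (hB₂ : M.IsBase B₂) (h₁ : ∀ e ∈ B₁ \ B₂, w e ≤ c)
    (h₂ : ∀ e ∈ B₂ \ B₁, c ≤ w e) : wt w B₁ ≤ wt w B₂ := by
  have hsdiff : wt w (B₁ \ B₂) ≤ wt w (B₂ \ B₁) := calc
    wt w (B₁ \ B₂) ≤ (B₁ \ B₂).ncard * c := wt_le_ncard_mul hB₁.finite.sdiff h₁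
    _ = (B₂ \ B₁).ncard * c := by rw [hB₁.ncard_sdiff_comm hB₂]
    _ ≤ wt w (B₂ \ B₁) := ncard_mul_le_wt hB₂.finite.sdiff h₂
  rw [← wt_inter_add_wt_sdiff_s17 hB₁.finite B₂, ← wt_inter_add_wt_sdiff_s17 hB₂.finite B₁, inter_comm]
  linarith

end Weight

lemma minWeightBase_of_ground_eq_empty {M : Matroid α} (w : α → ℝ) (hE : M.E = ∅) :
    MinWeightBase M w ∅ := by
  have hbase_eq : ∀ {B}, M.IsBase B → B = ∅ := fun hB => subset_empty_iff.1 (hE ▸ hB.subset_ground)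
  obtain ⟨B, hB⟩ := M.exists_isBase
  exact ⟨hbase_eq hB ▸ hB, fun B' hB' => by rw [hbase_eq hB']⟩

lemma MinWeightBase.union_of_isBasis {M : Matroid α} [M.RankFinite] {w : α → ℝ} {c : ℝ}
    {I X B : Set α} (hc : ∀ e ∈ M.E, c ≤ w e) (hX : ∀ e ∈ X, w e ≤ c) (hI : M.IsBasis I X)
    (hB : MinWeightBase (M ／ X) w B) : MinWeightBase M w (I ∪ B) := by
  obtain ⟨hBI, hdj⟩ := hI.contract_isBase_iff.1 hB.1
  refine ⟨union_comm B I ▸ hBI, fun B' hB' => ?_⟩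
  obtain ⟨B₃, hB₃, hIB₃, hB₃B'⟩ := hI.indep.exists_isBase_subset_union_isBase hB'
  have hB₃X : B₃ ∩ X = I := hI.inter_eq_of_subset_indep hIB₃ hB₃.indep
  have hB₃ctr : (M ／ X).IsBase (B₃ \ X) :=
    hI.contract_isBase_iff.2 ⟨by rwa [← hB₃X, sdiff_union_inter], disjoint_sdiff_left⟩
  calc wt w (I ∪ B) = wt w I + wt w B :=
        wt_union hI.indep.finite hB.1.finite (hdj.symm.mono_left hI.subset)
    _ ≤ wt w I + wt w (B₃ \ X) := by gcongr; exact hB.2 _ hB₃ctr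
    _ = wt w B₃ := by rw [← hB₃X, wt_inter_add_wt_sdiff_s17 hB₃.finite]
    _ ≤ wt w B' := hB₃.wt_le_of_sdiff_le_le_sdiff hB'
        (fun e he => hX e (hI.subset ((hB₃B' he.1).resolve_right he.2)))
        (fun e he => hc e (hB'.subset_ground he.1))

/-- Any basis produced by the greedy procedure is a minimum-weight
basis of `M`. -/
theorem stmt17 [Fintype α] (M : Matroid α) (w : α → ℝ) (B : Set α)
    (hB : GreedyOut w M B) : MinWeightBase M w B := by
  induction hB with
  | empty M hE => exact minWeightBase_of_ground_eq_empty w hE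
  | step M wmin hmin I B hI _ ih =>
    rw [ctr_eq_contract] at ih
    have hX : {e ∈ M.E | w e = wmin} ⊆ M.E := sep_subset _ _
    exact ih.union_of_isBasis (fun e he => hmin.2 ⟨e, he, rfl⟩) (fun e he => he.2.le)
      ((isBase_restrict_iff hX).1 hI)
end
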